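/- For all natural numbers n, the sum over k from 1 to n of k·H_k·H_{n-k} equals n(n+1)/2 · [H_{n+1}² - H^{(2)}_{n+1} - 2H_{n+1} + 2]. -/
import Mathlib

open Finset BigOperators

def H (n : ℕ) : ℚ := ∑ i ∈ Finset.range n, 1 / (i + 1 : ℚ)

def H2 (n : ℕ) : ℚ := ∑ i ∈ Finset.range n, 1 / ((i + 1 : ℚ))^2

lemma H_succ (n : ℕ) : H (n+1) = H n + 1/(n+1 : ℚ) := by
  simpa [H] using Finset.sum_range_succ (fun i => 1/(i+1:ℚ)) n

lemma H2_succ (n : ℕ) : H2 (n+1) = H2 n + 1/((n+1 : ℚ))^2 := by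
  exact Finset.sum_range_succ (fun i => 1/((i+1:ℚ))^2) n

lemma Hpos (n : ℕ) : ((n:ℚ)+1) ≠ 0 := by positivity

lemma lemA (n : ℕ) : ∑ k ∈ Finset.range (n+1), H (n-k) / ((k:ℚ)+1)
    = H (n+1)^2 - H2 (n+1) := by
  induction n with
  | zero => simp [H, H2]
  | succ n ih =>
    rw [Finset.sum_range_succ]
    have h0 : H (n+1-(n+1)) = 0 := by simp [H]
    rw [h0]
    have key : ∀ k ∈ Finset.range (n+1),
        H (n+1-k) / ((k:ℚ)+1)
          = H (n-k) / ((k:ℚ)+1)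
            + (1/((n+2:ℚ))) * (1/(((n-k:ℕ):ℚ)+1) + 1/((k:ℚ)+1)) := by
      intro k hk
      have hk' : k ≤ n := Nat.lt_succ_iff.mp (Finset.mem_range.mp hk)
      have hcast : ((n-k:ℕ):ℚ) = (n:ℚ) - k := by
        push_cast [hk']; ring
      rw [show n+1-k = (n-k)+1 from by omega, H_succ, hcast]
      have h1 : ((n:ℚ) - k + 1) ≠ 0 := by
        have : (k:ℚ) ≤ n := by exact_mod_cast hk'
        linarith
      have h2 : ((k:ℚ)+1) ≠ 0 := Hpos k
      have h3 : ((n:ℚ)+2) ≠ 0 := by positivity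
      field_simp
      ring
    rw [Finset.sum_congr rfl key, Finset.sum_add_distrib, ih,
      ← Finset.mul_sum, Finset.sum_add_distrib]
    have hrefl : ∑ k ∈ Finset.range (n+1), 1/(((n-k:ℕ):ℚ)+1)
        = H (n+1) := by
      have := Finset.sum_range_reflect (fun j => 1/((j:ℚ)+1)) (n+1)
      simpa [H] using this
    rw [hrefl]
    have hH : (∑ k ∈ Finset.range (n+1), 1/((k:ℚ)+1)) = H (n+1) := by
      simp [H]
    rw [hH, H_succ (n+1), H2_succ (n+1)]
    have h3 : ((n:ℚ)+2) ≠ 0 := by positivity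
    push_cast
    field_simp
    ring

lemma lemT (n : ℕ) : ∑ k ∈ Finset.range (n+1), H k * H (n-k)
    = (n+1) * (H (n+1)^2 - H2 (n+1) - 2 * H (n+1) + 2) := by
  induction n with
  | zero => simp [H, H2]
  | succ n ih =>
    rw [Finset.sum_range_succ]
    have h0 : H (n+1-(n+1)) = 0 := by simp [H]
    rw [h0, mul_zero, add_zero]
    have key : ∀ k ∈ Finset.range (n+1),
        H k * H (n+1-k) = H k * H (n-k) + H k / (((n-k:ℕ):ℚ)+1) := by
      intro k hk
      have hk' : k ≤ n := Nat.lt_succ_iff.mp (Finset.mem_range.mp hk)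
      rw [show n+1-k = (n-k)+1 from by omega, H_succ]
      ring
    rw [Finset.sum_congr rfl key, Finset.sum_add_distrib, ih]
    have hrefl : ∑ k ∈ Finset.range (n+1), H k / (((n-k:ℕ):ℚ)+1)
        = ∑ k ∈ Finset.range (n+1), H (n-k) / ((k:ℚ)+1) := by
      rw [← Finset.sum_range_reflect (fun k => H k / (((n-k:ℕ):ℚ)+1)) (n+1)]
      apply Finset.sum_congr rfl
      intro k hk
      have hk' : k ≤ n := Nat.lt_succ_iff.mp (Finset.mem_range.mp hk)
      rw [show n+1-1-k = n-k from by omega, show n-(n-k) = k from by omega]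
    rw [hrefl, lemA, H_succ (n+1), H2_succ (n+1)]
    have h3 : ((n:ℚ)+2) ≠ 0 := by positivity
    push_cast
    field_simp
    ring

theorem stmt9 (n : ℕ) :
    ∑ k ∈ Finset.Icc 1 n, (k : ℚ) * H k * H (n - k)
      = n * (n + 1) / 2 * (H (n + 1)^2 - H2 (n + 1) - 2 * H (n + 1) + 2) := by
  have hset : Finset.range (n+1) = insert 0 (Finset.Icc 1 n) := by
    ext k; simp [Finset.mem_range, Finset.mem_Icc]; omega
  have hS : ∑ k ∈ Finset.Icc 1 n, (k : ℚ) * H k * H (n - k)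
      = ∑ k ∈ Finset.range (n+1), (k : ℚ) * H k * H (n - k) := by
    rw [hset, Finset.sum_insert (by simp)]
    simp
  have hrefl : ∑ k ∈ Finset.range (n+1), (k : ℚ) * H k * H (n - k)
      = ∑ k ∈ Finset.range (n+1), ((n-k:ℕ) : ℚ) * H (n-k) * H k := by
    rw [← Finset.sum_range_reflect (fun k => ((n-k:ℕ):ℚ) * H (n-k) * H k) (n+1)]
    apply Finset.sum_congr rfl
    intro k hk
    have hk' : k ≤ n := Nat.lt_succ_iff.mp (Finset.mem_range.mp hk)
    rw [show n+1-1-k = n-k from by omega, show n-(n-k) = k from by omega]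
  have h2S : (2:ℚ) * ∑ k ∈ Finset.range (n+1), (k : ℚ) * H k * H (n - k)
      = (n:ℚ) * ∑ k ∈ Finset.range (n+1), H k * H (n-k) := by
    rw [two_mul]
    nth_rewrite 2 [hrefl]
    rw [← Finset.sum_add_distrib, Finset.mul_sum]
    apply Finset.sum_congr rfl
    intro k hk
    have hk' : k ≤ n := Nat.lt_succ_iff.mp (Finset.mem_range.mp hk)
    have hcast : ((n-k:ℕ):ℚ) = (n:ℚ) - k := by push_cast [hk']; ring
    rw [hcast]; ring
  rw [hS]
  have := h2S
  rw [lemT] at this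
  linarith [this]
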